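/- Fix γ ∈ ℝ and let ψ_γ(x) = e^{-γ|x|}/(2π|x|). Then ψ_γ is (γ²/2)-excessive for the 3-dimensional Brownian semigroup R_t: e^{-γ²t/2} ∫_{ℝ³} r(t, x-y) ψ_γ(y) dy ≤ ψ_γ(x) for all t > 0 and x ∈ ℝ³ \ {0}, where r(t,z) = (2πt)^{-3/2} e^{-|z|²/(2t)}. -/

import Mathlib

open MeasureTheory Real Set

noncomputable def psi (γ : ℝ) (x : EuclideanSpace ℝ (Fin 3)) : ℝ :=
  Real.exp (-γ * ‖x‖) / (2 * Real.pi * ‖x‖)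

/-!
Rotate so that `x = ‖x‖ e`, and write `y` through `b = ⟪e, y⟫` and `u = ‖y‖`. Cylindrical
coordinates around `e` turn `dy` into `2π u du db` on `{|b| < u}`, and the factor `u` cancels the
`1 / u` of `ψ_γ`. Enlarging `{|b| < u}` to `{b < u}` (the only inequality), the `b`-integral is
elementary and the remaining `u`-integral is a Gaussian integral equal to
`√(2πt) e^{γ²t/2 - γ‖x‖}`; the constants combine to `e^{γ²t/2} ψ_γ(x)`.
-/

theorem image_sqrt_sq_add_sq_Ioi (b : ℝ) : (fun r => √(b ^ 2 + r ^ 2)) '' Ioi 0 = Ioi |b| := by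
  ext u
  constructor
  · rintro ⟨r, hr, rfl⟩
    rw [mem_Ioi, ← sqrt_sq_eq_abs]
    exact sqrt_lt_sqrt (sq_nonneg b) (by nlinarith [mem_Ioi.mp hr])
  · intro hu
    have hbu : b ^ 2 < u ^ 2 := sq_lt_sq' (by linarith [neg_abs_le b, mem_Ioi.mp hu])
      (lt_of_le_of_lt (le_abs_self b) hu)
    refine ⟨√(u ^ 2 - b ^ 2), sqrt_pos.mpr (by linarith), ?_⟩
    dsimp only
    rw [sq_sqrt (by linarith), add_sub_cancel, sqrt_sq ((abs_nonneg b).trans (le_of_lt hu))]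

theorem lintegral_Ioi_sqrt_sq_add_sq (b : ℝ) (K : ℝ → ENNReal) :
    ∫⁻ r in Ioi 0, ENNReal.ofReal r * K √(b ^ 2 + r ^ 2) =
      ∫⁻ u in Ioi |b|, ENNReal.ofReal u * K u := by
  have hpos : ∀ r ∈ Ioi (0 : ℝ), 0 < b ^ 2 + r ^ 2 := fun r hr => by
    nlinarith [mem_Ioi.mp hr, sq_nonneg b]
  have hderiv : ∀ r ∈ Ioi (0 : ℝ), HasDerivWithinAt (fun r => √(b ^ 2 + r ^ 2))
      (r / √(b ^ 2 + r ^ 2)) (Ioi 0) r := fun r hr => by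
    have := ((hasDerivAt_pow 2 r).const_add (b ^ 2)).sqrt (hpos r hr).ne'
    refine (this.congr_deriv ?_).hasDerivWithinAt
    simp only [Nat.cast_ofNat]
    ring
  have hmono : StrictMonoOn (fun r => √(b ^ 2 + r ^ 2)) (Ioi 0) := fun p hp q _ hpq =>
    sqrt_lt_sqrt (by positivity) (by nlinarith [mem_Ioi.mp hp])
  rw [← image_sqrt_sq_add_sq_Ioi,
    lintegral_image_eq_lintegral_abs_deriv_mul measurableSet_Ioi hderiv hmono.injOn]
  refine setLIntegral_congr_fun measurableSet_Ioi fun r hr => ?_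
  have hs := sqrt_pos.mpr (hpos r hr)
  rw [← mul_assoc, ← ENNReal.ofReal_mul (abs_nonneg _), abs_of_pos (div_pos hr hs),
    div_mul_cancel₀ _ hs.ne']

theorem lintegral_Iio_exp_mul {k : ℝ} (hk : 0 < k) (u : ℝ) :
    ∫⁻ b in Iio u, ENNReal.ofReal (exp (k * b)) = ENNReal.ofReal (exp (k * u) / k) := by
  rw [setLIntegral_congr Iio_ae_eq_Iic, ← integral_exp_mul_Iic hk,
    ofReal_integral_eq_lintegral_ofReal (integrableOn_exp_mul_Iic hk u)
      (Filter.Eventually.of_forall fun _ => (exp_pos _).le)]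

theorem lintegral_exp_gaussian_sub_mul {t : ℝ} (ht : 0 < t) (a γ : ℝ) :
    ∫⁻ u, ENNReal.ofReal (exp (-(u - a) ^ 2 / (2 * t) - γ * u)) =
      ENNReal.ofReal (√(2 * π * t) * exp (γ ^ 2 * t / 2 - γ * a)) := by
  have hsq : ∀ u, -(u - a) ^ 2 / (2 * t) - γ * u =
      (γ ^ 2 * t / 2 - γ * a) + -(1 / (2 * t)) * (u - (a - γ * t)) ^ 2 := fun u => by
    field_simp
    ring
  have hint : Integrable fun u => exp (-(1 / (2 * t)) * (u - (a - γ * t)) ^ 2) :=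
    (integrable_exp_neg_mul_sq (by positivity)).comp_sub_right _
  simp_rw [hsq, exp_add]
  rw [← ofReal_integral_eq_lintegral_ofReal (hint.const_mul _)
    (Filter.Eventually.of_forall fun _ => by positivity), integral_const_mul,
    integral_sub_right_eq_self (fun u => exp (-(1 / (2 * t)) * u ^ 2)), integral_gaussian,
    mul_comm]
  congr 3
  field_simp

theorem lintegral_lintegral_Ioi_swap (P : ℝ → ℝ → ENNReal) (hP : Measurable (Function.uncurry P)) :
    ∫⁻ b, ∫⁻ u in Ioi b, P b u = ∫⁻ u, ∫⁻ b in Iio u, P b u := by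
  have hlt : MeasurableSet {p : ℝ × ℝ | p.1 < p.2} := measurableSet_lt measurable_fst measurable_snd
  calc ∫⁻ b, ∫⁻ u in Ioi b, P b u
      = ∫⁻ b, ∫⁻ u, {p : ℝ × ℝ | p.1 < p.2}.indicator (Function.uncurry P) (b, u) := by
        simp_rw [← lintegral_indicator measurableSet_Ioi, indicator_apply, mem_Ioi, mem_ofPred_eq,
          Function.uncurry_apply_pair]
    _ = ∫⁻ u, ∫⁻ b, {p : ℝ × ℝ | p.1 < p.2}.indicator (Function.uncurry P) (b, u) :=
        lintegral_lintegral_swap (hP.indicator hlt).aemeasurable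
    _ = ∫⁻ u, ∫⁻ b in Iio u, P b u := by
        simp_rw [← lintegral_indicator measurableSet_Iio, indicator_apply, mem_Iio, mem_ofPred_eq,
          Function.uncurry_apply_pair]

theorem lintegral_comp_sq_add_sq (H : ℝ → ENNReal) (hH : Measurable H) :
    ∫⁻ q : ℝ × ℝ, H (q.1 ^ 2 + q.2 ^ 2) =
      ENNReal.ofReal (2 * π) * ∫⁻ r in Ioi 0, ENNReal.ofReal r * H (r ^ 2) := by
  rw [← lintegral_comp_polarCoord_symm, polarCoord_target, Measure.volume_eq_prod,
    ← Measure.prod_restrict, lintegral_prod _ (by fun_prop)]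
  simp only [polarCoord_symm_apply, mul_pow, ← mul_add, cos_sq_add_sin_sq, mul_one, smul_eq_mul,
    lintegral_const, Measure.restrict_apply_univ, Real.volume_Ioo]
  rw [lintegral_mul_const' _ _ ENNReal.ofReal_ne_top, mul_comm]
  ring_nf

theorem measurePreserving_euclideanSpace_fin_three :
    MeasurePreserving (fun y : EuclideanSpace ℝ (Fin 3) => (y 0, y 1, y 2)) := by
  have h := (MeasurePreserving.id (volume : Measure ℝ)).prod (volume_preserving_finTwoArrow ℝ)
  rw [← Measure.volume_eq_prod, ← Measure.volume_eq_prod] at h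
  exact h.comp ((volume_preserving_piFinSuccAbove (fun _ : Fin 3 => ℝ) 0).comp
    (EuclideanSpace.volume_preserving_symm_measurableEquiv_toLp (Fin 3)))

theorem lintegral_euclideanSpace_fin_three_cylindrical (G : ℝ → ℝ → ENNReal)
    (hG : Measurable (Function.uncurry G)) :
    ∫⁻ y : EuclideanSpace ℝ (Fin 3), G (y 0) ‖y‖ =
      ENNReal.ofReal (2 * π) * ∫⁻ b, ∫⁻ u in Ioi |b|, ENNReal.ofReal u * G b u := by
  have hnorm : ∀ y : EuclideanSpace ℝ (Fin 3), ‖y‖ = √(y 0 ^ 2 + (y 1 ^ 2 + y 2 ^ 2)) := by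
    intro y
    rw [EuclideanSpace.norm_eq, Fin.sum_univ_three]
    simp only [Real.norm_eq_abs, sq_abs, add_assoc]
  simp_rw [hnorm]
  rw [measurePreserving_euclideanSpace_fin_three.lintegral_comp
      (f := fun p : ℝ × ℝ × ℝ => G p.1 √(p.1 ^ 2 + (p.2.1 ^ 2 + p.2.2 ^ 2))) (by fun_prop),
    Measure.volume_eq_prod, lintegral_prod _ (by fun_prop),
    ← lintegral_const_mul' _ _ ENNReal.ofReal_ne_top]
  congr 1 with b
  rw [lintegral_comp_sq_add_sq (fun s => G b √(b ^ 2 + s)) (by fun_prop)]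
  simp_rw [lintegral_Ioi_sqrt_sq_add_sq b (G b)]

theorem lintegral_inner_norm_eq_of_norm_eq {E : Type*} [NormedAddCommGroup E]
    [InnerProductSpace ℝ E] [FiniteDimensional ℝ E] [MeasurableSpace E] [BorelSpace E]
    {e e' : E} (h : ‖e‖ = ‖e'‖) (G : ℝ → ℝ → ENNReal) :
    ∫⁻ y, G (inner ℝ e y) ‖y‖ = ∫⁻ y, G (inner ℝ e' y) ‖y‖ := by
  set L := Submodule.reflection (Submodule.span ℝ {e' - e})ᗮ
  have hL : L e' = e := Submodule.reflection_sub h.symm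
  rw [← L.measurePreserving.lintegral_comp_emb L.toHomeomorph.measurableEmbedding]
  simp only [← hL, LinearIsometryEquiv.inner_map_map, LinearIsometryEquiv.norm_map]

theorem lintegral_inner_norm_euclideanSpace_fin_three {e : EuclideanSpace ℝ (Fin 3)}
    (he : ‖e‖ = 1) (G : ℝ → ℝ → ENNReal) (hG : Measurable (Function.uncurry G)) :
    ∫⁻ y, G (inner ℝ e y) ‖y‖ =
      ENNReal.ofReal (2 * π) * ∫⁻ b, ∫⁻ u in Ioi |b|, ENNReal.ofReal u * G b u := by
  have he₀ : ‖EuclideanSpace.single (0 : Fin 3) (1 : ℝ)‖ = 1 := by simp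
  rw [lintegral_inner_norm_eq_of_norm_eq (he.trans he₀.symm),
    ← lintegral_euclideanSpace_fin_three_cylindrical G hG]
  simp [EuclideanSpace.inner_single_left]

theorem psi_nonneg (γ : ℝ) (x : EuclideanSpace ℝ (Fin 3)) : 0 ≤ psi γ x := by
  unfold psi
  positivity

theorem measurable_psi (γ : ℝ) : Measurable (psi γ) := by
  unfold psi
  fun_prop

theorem lintegral_gaussian_mul_psi_eq (γ : ℝ) {t : ℝ} (ht : 0 < t)
    {x : EuclideanSpace ℝ (Fin 3)} (hx : x ≠ 0) :
    ∫⁻ y, ENNReal.ofReal (exp (-‖x - y‖ ^ 2 / (2 * t)) * psi γ y) =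
      ∫⁻ b, ∫⁻ u in Ioi |b|, ENNReal.ofReal (exp (‖x‖ / t * b)) *
        ENNReal.ofReal (exp (-(‖x‖ ^ 2 + u ^ 2) / (2 * t) - γ * u)) := by
  set a := ‖x‖
  have ha : 0 < a := norm_pos_iff.mpr hx
  set G : ℝ → ℝ → ENNReal := fun b u =>
    ENNReal.ofReal (exp (-(a ^ 2 - 2 * a * b + u ^ 2) / (2 * t)) * (exp (-γ * u) / (2 * π * u)))
  have he : ‖a⁻¹ • x‖ = 1 := by rw [norm_smul, norm_inv, norm_norm, inv_mul_cancel₀ ha.ne']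
  have hintegrand : ∀ y, ENNReal.ofReal (exp (-‖x - y‖ ^ 2 / (2 * t)) * psi γ y) =
      G (inner ℝ (a⁻¹ • x) y) ‖y‖ := fun y => by
    rw [norm_sub_sq_real, real_inner_smul_left]
    simp only [G, psi, a]
    congr 4
    field_simp
  have hslice : ∀ b, ∀ u ∈ Ioi |b|, ENNReal.ofReal (2 * π) * (ENNReal.ofReal u * G b u) =
      ENNReal.ofReal (exp (a / t * b)) *
        ENNReal.ofReal (exp (-(a ^ 2 + u ^ 2) / (2 * t) - γ * u)) := fun b u hu => by
    have hu : 0 < u := (abs_nonneg b).trans_lt hu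
    have hexp : exp (-(a ^ 2 - 2 * a * b + u ^ 2) / (2 * t)) * exp (-γ * u) =
        exp (a / t * b) * exp (-(a ^ 2 + u ^ 2) / (2 * t) - γ * u) := by
      rw [← exp_add, ← exp_add]
      congr 1
      field_simp
      ring
    simp only [G, ← ENNReal.ofReal_mul hu.le, ← ENNReal.ofReal_mul (exp_pos _).le,
      ← ENNReal.ofReal_mul (by positivity : 0 ≤ 2 * π), ← hexp]
    congr 1
    field_simp
  simp_rw [hintegrand, lintegral_inner_norm_euclideanSpace_fin_three he G (by fun_prop),
    ← lintegral_const_mul' _ _ ENNReal.ofReal_ne_top]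
  exact lintegral_congr fun b => setLIntegral_congr_fun measurableSet_Ioi (hslice b)

theorem lintegral_lintegral_Ioi_abs_exp_le {a t : ℝ} (ha : 0 < a) (ht : 0 < t) (γ : ℝ) :
    ∫⁻ b, ∫⁻ u in Ioi |b|, ENNReal.ofReal (exp (a / t * b)) *
        ENNReal.ofReal (exp (-(a ^ 2 + u ^ 2) / (2 * t) - γ * u)) ≤
      ENNReal.ofReal (t / a * (√(2 * π * t) * exp (γ ^ 2 * t / 2 - γ * a))) := by
  have hinner : ∀ u, ∫⁻ b in Iio u, ENNReal.ofReal (exp (a / t * b)) *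
      ENNReal.ofReal (exp (-(a ^ 2 + u ^ 2) / (2 * t) - γ * u)) =
      ENNReal.ofReal (t / a) * ENNReal.ofReal (exp (-(u - a) ^ 2 / (2 * t) - γ * u)) := fun u => by
    rw [lintegral_mul_const' _ _ ENNReal.ofReal_ne_top, lintegral_Iio_exp_mul (div_pos ha ht),
      ← ENNReal.ofReal_mul (by positivity), ← ENNReal.ofReal_mul (by positivity)]
    congr 1
    rw [show -(u - a) ^ 2 / (2 * t) - γ * u = a / t * u + (-(a ^ 2 + u ^ 2) / (2 * t) - γ * u) by
      field_simp; ring, exp_add]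
    field_simp
  calc _ ≤ ∫⁻ b, ∫⁻ u in Ioi b, ENNReal.ofReal (exp (a / t * b)) *
        ENNReal.ofReal (exp (-(a ^ 2 + u ^ 2) / (2 * t) - γ * u)) := by
        gcongr with b
        exact le_abs_self b
    _ = _ := by
        rw [lintegral_lintegral_Ioi_swap _ (by fun_prop), lintegral_congr hinner,
          lintegral_const_mul' _ _ ENNReal.ofReal_ne_top, lintegral_exp_gaussian_sub_mul ht,
          ← ENNReal.ofReal_mul (by positivity)]

theorem lintegral_heatKernel_mul_psi_le (γ : ℝ) {t : ℝ} (ht : 0 < t)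
    {x : EuclideanSpace ℝ (Fin 3)} (hx : x ≠ 0) :
    ∫⁻ y, ENNReal.ofReal ((2 * π * t) ^ (-(3 : ℝ) / 2) * exp (-‖x - y‖ ^ 2 / (2 * t)) * psi γ y)
      ≤ ENNReal.ofReal (exp (γ ^ 2 * t / 2) * psi γ x) := by
  set c := (2 * π * t) ^ (-(3 : ℝ) / 2)
  have ha : 0 < ‖x‖ := norm_pos_iff.mpr hx
  have hconst : c * t * √(2 * π * t) = 1 / (2 * π) := by
    rw [sqrt_eq_rpow, mul_right_comm, ← rpow_add (by positivity),
      show -(3 : ℝ) / 2 + 1 / 2 = -1 by norm_num, rpow_neg_one]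
    field_simp
  simp_rw [mul_assoc c, ENNReal.ofReal_mul (by positivity : 0 ≤ c)]
  rw [lintegral_const_mul' _ _ ENNReal.ofReal_ne_top, lintegral_gaussian_mul_psi_eq γ ht hx]
  calc _ ≤ ENNReal.ofReal c *
        ENNReal.ofReal (t / ‖x‖ * (√(2 * π * t) * exp (γ ^ 2 * t / 2 - γ * ‖x‖))) := by
        gcongr
        exact lintegral_lintegral_Ioi_abs_exp_le ha ht γ
    _ = _ := by
        rw [← ENNReal.ofReal_mul (by positivity), psi, sub_eq_add_neg, exp_add, ← neg_mul]
        congr 1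
        calc _ = c * t * √(2 * π * t) * exp (γ ^ 2 * t / 2) * exp (-γ * ‖x‖) / ‖x‖ := by ring
          _ = _ := by rw [hconst]; field_simp

theorem stmt19 (γ t : ℝ) (ht : 0 < t) (x : EuclideanSpace ℝ (Fin 3)) (hx : x ≠ 0) :
    Real.exp (-γ ^ 2 * t / 2) *
        ∫ y, (2 * Real.pi * t) ^ (-(3 : ℝ) / 2) * Real.exp (-‖x - y‖ ^ 2 / (2 * t)) * psi γ y
      ≤ psi γ x := by
  have hbound := ENNReal.toReal_mono ENNReal.ofReal_ne_top (lintegral_heatKernel_mul_psi_le γ ht hx)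
  rw [ENNReal.toReal_ofReal (mul_nonneg (exp_pos _).le (psi_nonneg γ x)),
    ← integral_eq_lintegral_of_nonneg_ae
      (Filter.Eventually.of_forall fun y => by have := psi_nonneg γ y; positivity)
      (by have := measurable_psi γ; fun_prop)] at hbound
  calc exp (-γ ^ 2 * t / 2) * _ ≤ exp (-γ ^ 2 * t / 2) * (exp (γ ^ 2 * t / 2) * psi γ x) := by
        gcongr
    _ = psi γ x := by
        rw [← mul_assoc, ← exp_add, neg_mul, neg_div, neg_add_cancel, exp_zero, one_mul]
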